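/- Let p be an odd prime and k, ℓ positive integers with p ∤ k and 2k < p^ℓ, and set N = 2·k·p^ℓ − 1. Let Q be a prime such that the Jacobi symbol (Q/N) = −1. Suppose w ∈ ℤ[√Q] satisfies N(w) ≡ 1 (mod N) and w^{(N+1)/p} ≢ 1 (mod N). Then N is prime if and only if Φ_p(w^{(N+1)/p}) ≡ 0 (mod N). -/

import Mathlib

/-!
If `r` is a prime with `(Q/r) = -1`, then `r` is inert in `ℤ[√Q]` and the Frobenius of
`ℤ[√Q]/(r)` is conjugation, so `w ^ (r + 1) ≡ N(w) ≡ 1 (mod r)`. When `N` is prime, `x = w^((N+1)/p)`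
thus satisfies `x ^ p = 1` in the domain `ℤ[√Q]/(N)`, and `x ≠ 1` forces `Φ_p(x) = 0`.
Conversely, `(Q/N) = -1` provides a prime `r ∣ N` with `(Q/r) = -1`; modulo `r`, `Φ_p(x) = 0` makes
`x` of order `p`, so `p^ℓ` divides the order of `w`, which divides `r + 1`. As `N ≡ -1 (mod p^ℓ)`
and `N + 1 < p^(2ℓ)`, the cofactor `N / r` is `≡ 1 (mod p^ℓ)` and too small to exceed `1`.
-/

open Polynomial

theorem aeval_cyclotomic_prime_mul_sub_one {R A : Type*} [CommRing R] [Ring A] [Algebra R A]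
    (p : ℕ) [Fact p.Prime] (x : A) : aeval x (cyclotomic p R) * (x - 1) = x ^ p - 1 := by
  simpa using congrArg (aeval x) (cyclotomic_prime_mul_X_sub_one R p)

theorem Ideal.Quotient.aeval_mk {R A : Type*} [CommRing R] [CommRing A] [Algebra R A]
    (I : Ideal A) (x : A) (P : R[X]) :
    aeval (Ideal.Quotient.mk I x) P = Ideal.Quotient.mk I (aeval x P) :=
  aeval_algHom_apply (Ideal.Quotient.mkₐ R I) x P

theorem prime_pow_succ_dvd_orderOf {M : Type*} [Monoid M] {p : ℕ} [Fact p.Prime] {u : M}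
    {a n : ℕ} (hne : u ^ (a * p ^ n) ≠ 1) (heq : u ^ (a * p ^ (n + 1)) = 1) :
    p ^ (n + 1) ∣ orderOf u := by
  rw [pow_mul] at hne heq
  exact orderOf_eq_prime_pow hne heq ▸ orderOf_pow_dvd a

/-- The cofactor `m = N / r` satisfies `m ≡ 1 (mod q)`, so `m ≠ 1` would give `m ≥ q + 1`, while
`r ≥ q - 1`. -/
theorem Nat.eq_of_dvd_of_add_one_dvd {N r q : ℕ} (hr : r ∣ N) (hrq : q ∣ r + 1)
    (hNq : q ∣ N + 1) (hN : N + 1 < q ^ 2) : r = N := by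
  obtain ⟨m, rfl⟩ := hr
  have hm : 0 < m := Nat.pos_of_ne_zero fun h => by
    subst h
    have := Nat.le_of_dvd one_pos (by simpa using hNq)
    nlinarith
  suffices m = 1 by simp [this]
  by_contra hm1
  have hqm : (q : ℤ) ∣ (m : ℤ) - 1 := by
    have h1 : (q : ℤ) ∣ ((r : ℤ) + 1) * m := by exact_mod_cast hrq.mul_right m
    have h2 : (q : ℤ) ∣ (r : ℤ) * m + 1 := by exact_mod_cast hNq
    rw [show (m : ℤ) - 1 = ((r : ℤ) + 1) * m - ((r : ℤ) * m + 1) by ring]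
    exact _root_.dvd_sub h1 h2
  have hmq : q + 1 ≤ m := by
    have := Int.le_of_dvd (by omega) hqm
    omega
  have hrq' : q ≤ r + 1 := Nat.le_of_dvd (Nat.succ_pos _) hrq
  nlinarith

namespace Zsqrtd

variable {d : ℤ} {r : ℕ} [Fact r.Prime]

theorem natCast_dvd_of_dvd_norm (hd : legendreSym r d = -1) {z : ℤ√d} (h : (r : ℤ) ∣ z.norm) :
    (r : ℤ√d) ∣ z := by
  have := legendreSym.prime_dvd_of_eq_neg_one hd (x := z.re) (y := z.im)
    (by rw [norm_def] at h; convert h using 1; ring)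
  exact_mod_cast (intCast_dvd _ _).2 this

theorem prime_natCast (hd : legendreSym r d = -1) : Prime (r : ℤ√d) := by
  have hr : Prime (r : ℤ) := Nat.prime_iff_prime_int.mp Fact.out
  refine ⟨?_, fun hunit => ?_, fun a b hab => ?_⟩
  · exact_mod_cast (Fact.out : r.Prime).ne_zero
  · have := (intCast_dvd (r : ℤ) 1).1 (by rw [Int.cast_natCast]; exact hunit.dvd)
    exact hr.not_isUnit (isUnit_of_dvd_one (by simpa using this.1))
  · obtain ⟨c, hc⟩ := hab
    have : (r : ℤ) ∣ a.norm * b.norm :=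
      ⟨r * c.norm, by rw [← norm_mul, hc, norm_mul, norm_natCast]; ring⟩
    exact (hr.dvd_or_dvd this).imp (natCast_dvd_of_dvd_norm hd) (natCast_dvd_of_dvd_norm hd)

/-- Both sides are ring homomorphisms of `z`, and on `√d` Euler's criterion gives
`√d ^ r = d ^ (r / 2) * √d = -√d`. -/
theorem mk_pow_eq_mk_star (hr : r ≠ 2) (hd : legendreSym r d = -1) (z : ℤ√d) :
    Ideal.Quotient.mk (Ideal.span {(r : ℤ√d)}) z ^ r =
      Ideal.Quotient.mk (Ideal.span {(r : ℤ√d)}) (star z) := by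
  set π := Ideal.Quotient.mk (Ideal.span {(r : ℤ√d)})
  have := CharP.quotient (ℤ√d) r (prime_natCast hd).not_isUnit
  have hd' : (d : ℤ√d ⧸ Ideal.span {(r : ℤ√d)}) ^ (r / 2) = -1 := by
    rw [← map_intCast (ZMod.castHom (dvd_refl r) (ℤ√d ⧸ Ideal.span {(r : ℤ√d)})), ← map_pow,
      ← legendreSym.eq_pow, hd]
    simp
  have hsqrtd : π sqrtd ^ r = -π sqrtd :=
    calc π sqrtd ^ r = (π sqrtd ^ 2) ^ (r / 2) * π sqrtd := by
          rw [← pow_mul, ← pow_succ,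
            Nat.two_mul_div_two_add_one_of_odd ((Fact.out : r.Prime).odd_of_ne_two hr)]
      _ = -π sqrtd := by rw [← map_pow, sq, dmuld, map_intCast, hd', neg_one_mul]
  have hstar : star (sqrtd : ℤ√d) = -sqrtd := by ext <;> simp
  have := hom_ext ((frobenius _ r).comp π) (π.comp (starRingEnd _))
    (by simpa [frobenius_def, starRingEnd_apply, hstar] using hsqrtd)
  exact RingHom.congr_fun this z

theorem mk_pow_succ_eq_one (hr : r ≠ 2) (hd : legendreSym r d = -1) {z : ℤ√d}
    (hz : (r : ℤ) ∣ z.norm - 1) :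
    Ideal.Quotient.mk (Ideal.span {(r : ℤ√d)}) z ^ (r + 1) = 1 := by
  rw [pow_succ, mk_pow_eq_mk_star hr hd, ← map_mul, mul_comm, ← norm_eq_mul_conj, ← sub_eq_zero,
    ← map_one (Ideal.Quotient.mk _), ← map_sub, Ideal.Quotient.eq_zero_iff_dvd]
  exact_mod_cast Int.cast_dvd_cast _ _ hz

theorem natCast_dvd_aeval_cyclotomic (hr : r ≠ 2) (hd : legendreSym r d = -1) {p a : ℕ}
    [Fact p.Prime] (hpa : a * p = r + 1) {w : ℤ√d} (hw : (r : ℤ) ∣ w.norm - 1)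
    (hw1 : ¬ (r : ℤ√d) ∣ w ^ a - 1) : (r : ℤ√d) ∣ aeval (w ^ a) (cyclotomic p ℤ) := by
  have := (Ideal.Quotient.isDomain_iff_prime _).2
    ((Ideal.span_singleton_prime (prime_natCast hd).ne_zero).2 (prime_natCast hd))
  rw [← Ideal.Quotient.eq_zero_iff_dvd, map_sub, map_one, sub_eq_zero] at hw1
  rw [← Ideal.Quotient.eq_zero_iff_dvd, ← Ideal.Quotient.aeval_mk]
  refine (mul_eq_zero.1 ?_).resolve_right (sub_ne_zero.2 hw1)
  rw [aeval_cyclotomic_prime_mul_sub_one, ← map_pow, ← pow_mul, hpa, map_pow,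
    mk_pow_succ_eq_one hr hd hw, sub_self]

theorem pow_succ_dvd_add_one_of_dvd_aeval_cyclotomic (hr : r ≠ 2) (hd : legendreSym r d = -1)
    {p a n : ℕ} [Fact p.Prime] (hrp : ¬ r ∣ p) {w : ℤ√d} (hw : (r : ℤ) ∣ w.norm - 1)
    (hΦ : (r : ℤ√d) ∣ aeval (w ^ (a * p ^ n)) (cyclotomic p ℤ)) : p ^ (n + 1) ∣ r + 1 := by
  have := CharP.quotient (ℤ√d) r (prime_natCast hd).not_isUnit
  set u := Ideal.Quotient.mk (Ideal.span {(r : ℤ√d)}) w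
  have hv : aeval (u ^ (a * p ^ n)) (cyclotomic p ℤ) = 0 := by
    rwa [← map_pow, Ideal.Quotient.aeval_mk, Ideal.Quotient.eq_zero_iff_dvd]
  have hv1 : u ^ (a * p ^ n) ≠ 1 := fun h => by
    rw [h, aeval_def, eval₂_at_one, eval_one_cyclotomic_prime, map_natCast,
      CharP.cast_eq_zero_iff _ r] at hv
    exact hrp hv
  have hvp : u ^ (a * p ^ (n + 1)) = 1 := by
    rw [pow_succ, ← mul_assoc, pow_mul, ← sub_eq_zero,
      ← aeval_cyclotomic_prime_mul_sub_one (R := ℤ), hv, zero_mul]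
  exact (prime_pow_succ_dvd_orderOf hv1 hvp).trans
    (orderOf_dvd_of_pow_eq_one (mk_pow_succ_eq_one hr hd hw))

end Zsqrtd

open Zsqrtd in
theorem stmt_12_general (p : ℕ) (hp : p.Prime)
    (k ℓ : ℕ) (hk : 0 < k) (hℓ : 0 < ℓ)
    (hlt : 2 * k < p ^ ℓ)
    (N : ℕ) (hN : N = 2 * k * p ^ ℓ - 1)
    (Q : ℕ) (hJ : jacobiSym (Q : ℤ) N = -1)
    (w : Zsqrtd (Q : ℤ))
    (hnorm : (N : ℤ) ∣ (w.norm - 1))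
    (hw : ¬ (N : Zsqrtd (Q : ℤ)) ∣ (w ^ (2 * k * p ^ (ℓ - 1)) - 1)) :
    N.Prime ↔
      (N : Zsqrtd (Q : ℤ)) ∣
        (Polynomial.aeval (w ^ (2 * k * p ^ (ℓ - 1))) (Polynomial.cyclotomic p ℤ)) := by
  have := Fact.mk hp
  obtain ⟨n, rfl⟩ : ∃ n, ℓ = n + 1 := ⟨ℓ - 1, by omega⟩
  rw [Nat.add_sub_cancel] at hw ⊢
  have hN1 : N + 1 = 2 * k * p ^ (n + 1) := by
    have : 0 < 2 * k * p ^ (n + 1) := Nat.mul_pos (by omega) (pow_pos hp.pos _)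
    omega
  have hNodd : ¬ 2 ∣ N := by rw [mul_assoc] at hN1; omega
  constructor
  · intro hNp
    have := Fact.mk hNp
    exact natCast_dvd_aeval_cyclotomic (by omega) (by rwa [jacobiSym.legendreSym.to_jacobiSym])
      (by rw [hN1, pow_succ, mul_assoc]) hnorm hw
  · intro hΦ
    obtain ⟨r, hr, hrN, hd⟩ := jacobiSym.eq_neg_one_at_prime_divisor_of_eq_neg_one hJ
    have := Fact.mk hr
    have hpN1 : p ^ (n + 1) ∣ N + 1 := hN1 ▸ dvd_mul_left _ _
    have hrp : ¬ r ∣ p := fun h => by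
      obtain rfl := (Nat.prime_dvd_prime_iff_eq hr hp).1 h
      have := (Nat.dvd_add_right hrN).1 ((dvd_pow_self r n.succ_ne_zero).trans hpN1)
      exact hr.one_lt.ne' (Nat.dvd_one.1 this)
    have hpr : p ^ (n + 1) ∣ r + 1 :=
      pow_succ_dvd_add_one_of_dvd_aeval_cyclotomic (by rintro rfl; exact hNodd hrN)
        (by rwa [jacobiSym.legendreSym.to_jacobiSym]) hrp
        ((Int.natCast_dvd_natCast.2 hrN).trans hnorm) ((Nat.cast_dvd_cast hrN).trans hΦ)
    refine Nat.eq_of_dvd_of_add_one_dvd hrN hpr hpN1 ?_ ▸ hr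
    rw [hN1, sq]
    exact Nat.mul_lt_mul_of_pos_right hlt (pow_pos hp.pos _)

/-- Theorem 9.1: primality criterion for `N = 2·k·p^ℓ − 1` over `ℤ[√Q]` for a
prime `Q` with `(Q/N) = −1`. -/
theorem stmt_12 (p : ℕ) (hp : p.Prime) (hpodd : Odd p)
    (k ℓ : ℕ) (hk : 0 < k) (hℓ : 0 < ℓ)
    (hpk : ¬ p ∣ k) (hlt : 2 * k < p ^ ℓ)
    (N : ℕ) (hN : N = 2 * k * p ^ ℓ - 1)
    (Q : ℕ) (hQ : Q.Prime) (hJ : jacobiSym (Q : ℤ) N = -1)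
    (w : Zsqrtd (Q : ℤ))
    (hnorm : (N : ℤ) ∣ (w.norm - 1))
    (hw : ¬ (N : Zsqrtd (Q : ℤ)) ∣ (w ^ (2 * k * p ^ (ℓ - 1)) - 1)) :
    N.Prime ↔
      (N : Zsqrtd (Q : ℤ)) ∣
        (Polynomial.aeval (w ^ (2 * k * p ^ (ℓ - 1))) (Polynomial.cyclotomic p ℤ)) :=
  stmt_12_general p hp k ℓ hk hℓ hlt N hN Q hJ w hnorm hw
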